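/- arXiv:2301.07530 — 2 statements merged into one kernel-verified Lean document; each statement's English description precedes it below -/
import Mathlib

section
/- Let d ≥ 1, ε > 0 and g₁, …, g_T ∈ ℝ^d. Define A₀ := ε·I_d and A_t := A_{t−1} + g_t g_tᵀ for 1 ≤ t ≤ T. Then Σ_{t=1}^{T} g_tᵀ A_t⁻¹ g_t ≤ log(det A_T) − log(det A₀). Moreover, if ‖g_t‖ ≤ G for all t, then Σ_{t=1}^{T} g_tᵀ A_t⁻¹ g_t ≤ d·log((T·G² + ε)/ε). -/
/-!
A rank-one update `A = B + v vᵀ` of a positive definite `B` satisfies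
`vᵀ A⁻¹ v = 1 - det B / det A` (matrix determinant lemma, and `A (B⁻¹ v) = (1 + vᵀ B⁻¹ v) v`),
and `1 - 1/x ≤ log x` bounds this by `log det A - log det B`, which telescopes along the updates.
For the second bound, `v vᵀ ⪯ ‖v‖² I` (Cauchy–Schwarz) gives `A_T ⪯ (ε + T G²) I`, so every
eigenvalue of `A_T`, and hence `det A_T`, is controlled by `ε + T G²`.
-/

open Matrix Finset

namespace Matrix

variable {n : Type*} [Fintype n]

section Field

variable [DecidableEq n] {K : Type*} [Field K]

theorem det_add_vecMulVec {B : Matrix n n K} (hB : IsUnit B.det) (u v : n → K) :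
    (B + vecMulVec u v).det = B.det * (1 + v ⬝ᵥ B⁻¹ *ᵥ u) := by
  have hfactor : B + vecMulVec u v = B * (1 + vecMulVec (B⁻¹ *ᵥ u) v) := by
    rw [Matrix.mul_add, Matrix.mul_one, mul_vecMulVec, mulVec_mulVec, mul_nonsing_inv _ hB,
      one_mulVec]
  rw [hfactor, det_mul, vecMulVec_eq Unit, det_one_add_replicateCol_mul_replicateRow]

theorem dotProduct_inv_add_vecMulVec_mulVec {B : Matrix n n K} {u v : n → K} (hB : IsUnit B.det)
    (hA : IsUnit (B + vecMulVec u v).det) :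
    v ⬝ᵥ (B + vecMulVec u v)⁻¹ *ᵥ u = 1 - B.det / (B + vecMulVec u v).det := by
  have hdet := det_add_vecMulVec hB u v
  set A := B + vecMulVec u v
  set s := v ⬝ᵥ B⁻¹ *ᵥ u
  have hs : 1 + s ≠ 0 := fun h => hA.ne_zero (by rw [hdet, h, mul_zero])
  have heig : A *ᵥ (B⁻¹ *ᵥ u) = (1 + s) • u := by
    rw [add_mulVec, mulVec_mulVec, mul_nonsing_inv _ hB, one_mulVec, vecMulVec_mulVec]
    simp [s, add_smul]
  have hsolve : A⁻¹ *ᵥ u = (1 + s)⁻¹ • (B⁻¹ *ᵥ u) :=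
    calc A⁻¹ *ᵥ u = A⁻¹ *ᵥ ((1 + s)⁻¹ • (A *ᵥ (B⁻¹ *ᵥ u))) := by
          rw [heig, smul_smul, inv_mul_cancel₀ hs, one_smul]
      _ = (1 + s)⁻¹ • (B⁻¹ *ᵥ u) := by
          rw [mulVec_smul, mulVec_mulVec, nonsing_inv_mul _ hA, one_mulVec]
  rw [hsolve, dotProduct_smul, hdet, smul_eq_mul]
  field_simp [hB.ne_zero]
  ring

end Field

theorem PosSemidef.smul_one_sub_vecMulVec_self [DecidableEq n] {v : n → ℝ} {c : ℝ}
    (hv : v ⬝ᵥ v ≤ c) : (c • (1 : Matrix n n ℝ) - vecMulVec v v).PosSemidef := by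
  refine .of_dotProduct_mulVec_nonneg ?_ fun x => ?_
  · exact (isHermitian_one.smul (IsSelfAdjoint.all c)).sub
      (by simpa using (posSemidef_vecMulVec_self_star v).isHermitian)
  · have hcs : (v ⬝ᵥ x) ^ 2 ≤ (v ⬝ᵥ v) * (x ⬝ᵥ x) := by
      simpa [dotProduct, sq] using Finset.sum_mul_sq_le_sq_mul_sq univ v x
    have hx : 0 ≤ x ⬝ᵥ x := Finset.sum_nonneg fun i _ => mul_self_nonneg (x i)
    rw [star_trivial, sub_mulVec, smul_mulVec, one_mulVec, vecMulVec_mulVec, dotProduct_sub,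
      dotProduct_smul, dotProduct_smul, dotProduct_comm x v]
    simp only [smul_eq_mul, MulOpposite.smul_eq_mul_unop, MulOpposite.unop_op]
    nlinarith

theorem IsHermitian.eigenvalues_le [DecidableEq n] {A : Matrix n n ℝ} (hA : A.IsHermitian)
    {c : ℝ} (hc : (c • (1 : Matrix n n ℝ) - A).PosSemidef) (i : n) : hA.eigenvalues i ≤ c := by
  set x := hA.eigenvectorBasis i
  have hunit : x.ofLp ⬝ᵥ x.ofLp = 1 := by
    have := real_inner_self_eq_norm_sq x
    rwa [hA.eigenvectorBasis.orthonormal.1 i, EuclideanSpace.inner_eq_star_dotProduct, star_trivial,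
      one_pow] at this
  have hquad := hc.dotProduct_mulVec_nonneg x
  rw [star_trivial, sub_mulVec, smul_mulVec, one_mulVec, dotProduct_sub, dotProduct_smul, hunit,
    smul_eq_mul, mul_one, sub_nonneg] at hquad
  simpa [hA.eigenvalues_eq] using hquad

theorem PosSemidef.det_le_pow_card [DecidableEq n] {A : Matrix n n ℝ} (hA : A.PosSemidef) {c : ℝ}
    (hc : (c • (1 : Matrix n n ℝ) - A).PosSemidef) : A.det ≤ c ^ Fintype.card n := by
  rw [hA.isHermitian.det_eq_prod_eigenvalues, ← Finset.card_univ, ← prod_const]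
  exact prod_le_prod (fun i _ => hA.eigenvalues_nonneg i)
    fun i _ => hA.isHermitian.eigenvalues_le hc i

theorem PosDef.add_vecMulVec_self {B : Matrix n n ℝ} (hB : B.PosDef) (v : n → ℝ) :
    (B + vecMulVec v v).PosDef := by
  simpa using hB.add_posSemidef (posSemidef_vecMulVec_self_star v)

theorem PosDef.dotProduct_inv_add_vecMulVec_self_le_log_det_sub [DecidableEq n]
    {B : Matrix n n ℝ} (hB : B.PosDef) (v : n → ℝ) :
    v ⬝ᵥ (B + vecMulVec v v)⁻¹ *ᵥ v ≤ Real.log (B + vecMulVec v v).det - Real.log B.det := by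
  have hA := hB.add_vecMulVec_self v
  rw [dotProduct_inv_add_vecMulVec_mulVec hB.det_pos.ne'.isUnit hA.det_pos.ne'.isUnit,
    ← Real.log_div hA.det_pos.ne' hB.det_pos.ne', ← inv_div]
  exact Real.one_sub_inv_le_log_of_pos (div_pos hA.det_pos hB.det_pos)

theorem posDef_of_add_vecMulVec_self {A : ℕ → Matrix n n ℝ} {v : ℕ → n → ℝ} {T : ℕ}
    (h0 : (A 0).PosDef) (hrec : ∀ t ∈ Icc 1 T, A t = A (t - 1) + vecMulVec (v t) (v t)) :
    ∀ t ≤ T, (A t).PosDef := by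
  intro t
  induction t with
  | zero => exact fun _ => h0
  | succ t ih =>
    intro ht
    rw [hrec (t + 1) (mem_Icc.mpr ⟨by omega, ht⟩), Nat.add_sub_cancel]
    exact (ih (by omega)).add_vecMulVec_self (v (t + 1))

theorem posSemidef_smul_one_sub_of_add_vecMulVec_self [DecidableEq n] {A : ℕ → Matrix n n ℝ}
    {v : ℕ → n → ℝ} {T : ℕ} {c K : ℝ} (h0 : (c • 1 - A 0).PosSemidef)
    (hv : ∀ t ∈ Icc 1 T, v t ⬝ᵥ v t ≤ K)
    (hrec : ∀ t ∈ Icc 1 T, A t = A (t - 1) + vecMulVec (v t) (v t)) :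
    ∀ t ≤ T, ((c + t * K) • 1 - A t).PosSemidef := by
  intro t
  induction t with
  | zero => simpa using h0
  | succ t ih =>
    intro ht
    have hmem : t + 1 ∈ Icc 1 T := mem_Icc.mpr ⟨by omega, ht⟩
    have hsplit : (c + ↑(t + 1) * K) • (1 : Matrix n n ℝ) -
          (A t + vecMulVec (v (t + 1)) (v (t + 1))) =
        ((c + t * K) • 1 - A t) + (K • 1 - vecMulVec (v (t + 1)) (v (t + 1))) := by
      push_cast
      module
    rw [hrec (t + 1) hmem, Nat.add_sub_cancel, hsplit]
    exact (ih (by omega)).add (PosSemidef.smul_one_sub_vecMulVec_self (hv (t + 1) hmem))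

end Matrix

theorem Finset.sum_Icc_one_sub {M : Type*} [AddCommGroup M] (f : ℕ → M) (T : ℕ) :
    ∑ t ∈ Icc 1 T, (f t - f (t - 1)) = f T - f 0 := by
  induction T with
  | zero => simp
  | succ T ih =>
    rw [sum_Icc_succ_top (by omega), ih, Nat.add_sub_cancel]
    abel

theorem EuclideanSpace.dotProduct_self_eq_norm_sq {n : Type*} [Fintype n]
    (x : EuclideanSpace ℝ n) : x.ofLp ⬝ᵥ x.ofLp = ‖x‖ ^ 2 := by
  rw [← real_inner_self_eq_norm_sq, EuclideanSpace.inner_eq_star_dotProduct, star_trivial]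

theorem ons_log_det_bound_general {d : ℕ} (ε : ℝ) (hε : 0 < ε)
    (T : ℕ) (g : ℕ → EuclideanSpace ℝ (Fin d))
    (A : ℕ → Matrix (Fin d) (Fin d) ℝ)
    (hA0 : A 0 = ε • 1)
    (hArec : ∀ t ∈ Icc 1 T, A t = A (t - 1) + Matrix.vecMulVec (g t : Fin d → ℝ) (g t : Fin d → ℝ)) :
    (∑ t ∈ Icc 1 T, g t ⬝ᵥ (A t)⁻¹.mulVec (g t) ≤ Real.log (A T).det - Real.log (A 0).det)
    ∧ ∀ G : ℝ, (∀ t ∈ Icc 1 T, ‖g t‖ ≤ G) →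
        ∑ t ∈ Icc 1 T, g t ⬝ᵥ (A t)⁻¹.mulVec (g t) ≤ d * Real.log ((T * G ^ 2 + ε) / ε) := by
  have hpd := posDef_of_add_vecMulVec_self (hA0 ▸ PosDef.one.smul hε) hArec
  have hlogdet : ∑ t ∈ Icc 1 T, g t ⬝ᵥ (A t)⁻¹.mulVec (g t) ≤
      Real.log (A T).det - Real.log (A 0).det :=
    calc ∑ t ∈ Icc 1 T, g t ⬝ᵥ (A t)⁻¹.mulVec (g t)
        ≤ ∑ t ∈ Icc 1 T, (Real.log (A t).det - Real.log (A (t - 1)).det) :=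
          sum_le_sum fun t ht => by
            rw [hArec t ht]
            exact (hpd (t - 1) (by grind)).dotProduct_inv_add_vecMulVec_self_le_log_det_sub _
      _ = Real.log (A T).det - Real.log (A 0).det :=
          sum_Icc_one_sub (fun t => Real.log (A t).det) T
  refine ⟨hlogdet, fun G hG => ?_⟩
  have hupper := posSemidef_smul_one_sub_of_add_vecMulVec_self (c := ε) (K := G ^ 2)
    (by simpa [hA0] using PosSemidef.zero) (fun t ht => by
      rw [EuclideanSpace.dotProduct_self_eq_norm_sq]
      exact pow_le_pow_left₀ (norm_nonneg _) (hG t ht) 2) hArec T le_rfl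
  have hlogT : Real.log (A T).det ≤ d * Real.log (ε + T * G ^ 2) := by
    rw [← Real.log_pow]
    exact Real.log_le_log (hpd T le_rfl).det_pos
      (by simpa using (hpd T le_rfl).posSemidef.det_le_pow_card hupper)
  have hlog0 : Real.log (A 0).det = d * Real.log ε := by
    rw [hA0, det_smul, det_one, mul_one, Fintype.card_fin, Real.log_pow]
  calc ∑ t ∈ Icc 1 T, g t ⬝ᵥ (A t)⁻¹.mulVec (g t)
      ≤ d * Real.log (ε + T * G ^ 2) - d * Real.log ε := by linarith
    _ = d * Real.log ((T * G ^ 2 + ε) / ε) := by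
      rw [Real.log_div (by positivity) hε.ne', add_comm]
      ring

/-- Telescoping log-determinant bound used inside Proposition `dynamic_ONS`: with `A₀ = εI` and
`A_t = A_{t−1} + g_t g_tᵀ`, one has `Σ_t g_tᵀA_t⁻¹g_t ≤ log det A_T − log det A₀`; and if
moreover `‖g_t‖ ≤ G` for all `t`, then `Σ_t g_tᵀA_t⁻¹g_t ≤ d·log((TG² + ε)/ε)`. -/
theorem ons_log_det_bound {d : ℕ} (hd : 1 ≤ d) (ε : ℝ) (hε : 0 < ε)
    (T : ℕ) (g : ℕ → EuclideanSpace ℝ (Fin d))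
    (A : ℕ → Matrix (Fin d) (Fin d) ℝ)
    (hA0 : A 0 = ε • 1)
    (hArec : ∀ t ∈ Icc 1 T, A t = A (t - 1) + Matrix.vecMulVec (g t : Fin d → ℝ) (g t : Fin d → ℝ)) :
    (∑ t ∈ Icc 1 T, g t ⬝ᵥ (A t)⁻¹.mulVec (g t) ≤ Real.log (A T).det - Real.log (A 0).det)
    ∧ ∀ G : ℝ, (∀ t ∈ Icc 1 T, ‖g t‖ ≤ G) →
        ∑ t ∈ Icc 1 T, g t ⬝ᵥ (A t)⁻¹.mulVec (g t) ≤ d * Real.log ((T * G ^ 2 + ε) / ε) :=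
  ons_log_det_bound_general ε hε T g A hA0 hArec
end

section
/- Let (Ω, 𝒜, P) be a probability space with a filtration (ℱ_t)_{t≥0}, K ⊆ ℝ^d a convex set of diameter at most D > 0, and λ, G > 0 with λ ≤ 6G². For each t ≥ 1 let ℓ_t : Ω × ℝ^d → ℝ be such that ω ↦ ℓ_t(ω, ·) and its gradient are jointly measurable and ℱ_t-measurable in ω, and assume that almost surely: (i) ℓ_t(ω, ·) is differentiable and λ-strongly convex on K in the paper's convention (ℓ_t(ω, μ) − ℓ_t(ω, μ₀) ≤ ⟨∇ℓ_t(ω, μ), μ − μ₀⟩ − λ‖μ − μ₀‖² for μ, μ₀ ∈ K); (ii) ‖∇ℓ_t(ω, x)‖ ≤ G for all x ∈ K; and assume ω ↦ sup_{x∈K}|ℓ_t(ω, x)| is integrable. Let (μ̂_t)_{t≥1} and (μ_t)_{t≥1} be sequences of K-valued random variables with μ̂_t and μ_t ℱ_{t−1}-measurable. Then for every δ ∈ (0,1), with probability at least 1 − 2δ the following holds simultaneously for every T ≥ 1: Σ_{t=1}^{T} E[ℓ_t(·, μ̂_t) | ℱ_{t−1}] − Σ_{t=1}^{T} E[ℓ_t(·,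 μ_t) | ℱ_{t−1}] ≤ Σ_{t=1}^{T} ⟨∇ℓ_t(·, μ̂_t), μ̂_t − μ_t⟩ + (2(G·D)² + 6G²/λ)·log(1/δ). -/
/-!
Strong convexity linearizes the regret: conditionally on `ℱ (t - 1)`,
`E[ℓ_t(μ̂_t)] - E[ℓ_t(μ_t)] ≤ A_t - λ‖μ̂_t - μ_t‖²` with `Y_t = ⟪∇ℓ_t(μ̂_t), μ̂_t - μ_t⟫` and
`A_t = E[Y_t | ℱ (t - 1)]`. The deviation `∑ (A_t - Y_t)` is controlled by an exponential
supermartingale of Freedman type: since `|η Y_t| ≤ 1` and `Y_t² ≤ G²‖μ̂_t - μ_t‖²`, the bound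
`eˣ ≤ 1 + x + x²` on `[-1, 1]` gives
`E[exp (η (A_t - Y_t) - η² G² ‖μ̂_t - μ_t‖²) | ℱ (t - 1)] ≤ 1`, and Ville's maximal inequality for
nonnegative supermartingales shows that with probability at least `1 - δ`, for all `T` at once,
`η ∑ (A_t - Y_t) - η² G² ∑ ‖μ̂_t - μ_t‖² < log (1/δ)`. For `η = min (λ/G²) (1/(GD))` the quadratic
term is absorbed by the strong-convexity margin `λ ∑ ‖μ̂_t - μ_t‖²`, and what is left is
`log (1/δ) / η ≤ (2(GD)² + 6G²/λ) log (1/δ)`, using `λ ≤ 6G²`.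
-/

open MeasureTheory RealInnerProductSpace Finset

section Probability

variable {Ω : Type*} {m m0 : MeasurableSpace Ω} {P : Measure Ω}

theorem integrable_exp_of_ae_le [IsFiniteMeasure P] {f : Ω → ℝ} {B : ℝ}
    (hf : AEStronglyMeasurable f P) (hB : ∀ᵐ ω ∂P, f ω ≤ B) :
    Integrable (fun ω => Real.exp (f ω)) P :=
  .of_bound (Real.continuous_exp.comp_aestronglyMeasurable hf) (Real.exp B) <|
    hB.mono fun ω h => by
      rw [Real.norm_of_nonneg (Real.exp_pos _).le]
      exact Real.exp_le_exp.2 h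

theorem ae_abs_mul_condExp_le_one [IsFiniteMeasure P] {Y : Ω → ℝ} {η : ℝ}
    (hY : ∀ᵐ ω ∂P, |η * Y ω| ≤ 1) : ∀ᵐ ω ∂P, |η * P[Y|m] ω| ≤ 1 := by
  filter_upwards [condExp_smul (μ := P) η Y m,
    ae_bdd_abs_condExp_of_ae_bdd_abs (m := m) (R := (1 : ℝ)) (f := η • Y) hY] with ω h1 h2
  simpa [h1] using h2

theorem condExp_exp_mul_condExp_sub_sub_le_one [IsFiniteMeasure P] (hm : m ≤ m0)
    {Y V : Ω → ℝ} {η : ℝ} (hY : Integrable Y P) (hY1 : ∀ᵐ ω ∂P, |η * Y ω| ≤ 1)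
    (hV : StronglyMeasurable[m] V) (hVint : Integrable V P) (hYV : ∀ᵐ ω ∂P, Y ω ^ 2 ≤ V ω) :
    P[fun ω => Real.exp (η * (P[Y|m] ω - Y ω) - η ^ 2 * V ω)|m] ≤ᵐ[P] 1 := by
  set A := P[Y|m]
  have hA1 := ae_abs_mul_condExp_le_one (m := m) hY1
  have hV0 : ∀ᵐ ω ∂P, 0 ≤ V ω := hYV.mono fun ω h => (sq_nonneg _).trans h
  set W : Ω → ℝ := fun ω => η * A ω - η ^ 2 * V ω
  have hW : StronglyMeasurable[m] W :=
    (stronglyMeasurable_condExp.const_mul η).sub (hV.const_mul _)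
  have hsplit : (fun ω => Real.exp (η * (A ω - Y ω) - η ^ 2 * V ω))
      = (fun ω => Real.exp (W ω)) * fun ω => Real.exp (-(η * Y ω)) := by
    ext ω
    rw [Pi.mul_apply, ← Real.exp_add]
    congr 1
    ring
  have hexpY : Integrable (fun ω => Real.exp (-(η * Y ω))) P :=
    integrable_exp_of_ae_le (hY.aestronglyMeasurable.const_mul η).neg
      (hY1.mono fun ω h => (neg_le_abs _).trans h)
  have hprod : Integrable ((fun ω => Real.exp (W ω)) * fun ω => Real.exp (-(η * Y ω))) P := by
    rw [← hsplit]
    refine integrable_exp_of_ae_le (B := 2)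
      (((integrable_condExp.sub hY).const_mul η).sub (hVint.const_mul _)).aestronglyMeasurable ?_
    filter_upwards [hA1, hY1, hV0] with ω h1 h2 h3
    nlinarith [abs_le.mp h1, abs_le.mp h2, sq_nonneg η]
  have hquad : (fun ω => Real.exp (-(η * Y ω))) ≤ᵐ[P] fun ω => (1 + η ^ 2 * V ω) - η * Y ω := by
    filter_upwards [hY1, hYV] with ω h1 h2
    have := (abs_le.mp (Real.abs_exp_sub_one_sub_id_le (x := -(η * Y ω)) (by rwa [abs_neg]))).2
    nlinarith [sq_nonneg η]
  have h1V : Integrable (fun ω => 1 + η ^ 2 * V ω) P := (integrable_const 1).add (hVint.const_mul _)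
  have h1Vm : StronglyMeasurable[m] fun ω => 1 + η ^ 2 * V ω :=
    stronglyMeasurable_const.add (hV.const_mul _)
  have hR : Integrable (fun ω => (1 + η ^ 2 * V ω) - η * Y ω) P := h1V.sub (hY.const_mul η)
  have hcond : P[fun ω => (1 + η ^ 2 * V ω) - η * Y ω|m]
      =ᵐ[P] fun ω => (1 + η ^ 2 * V ω) - η * A ω := by
    filter_upwards [condExp_sub h1V (hY.const_mul η) m, condExp_smul (μ := P) η Y m] with ω h h'
    refine h.trans ?_
    rw [Pi.sub_apply, condExp_of_stronglyMeasurable hm h1Vm h1V]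
    exact congrArg _ h'
  rw [hsplit]
  filter_upwards [condExp_mul_of_stronglyMeasurable_left
      (Real.continuous_exp.comp_stronglyMeasurable hW) hprod hexpY,
    condExp_mono (m := m) hexpY hR hquad, hcond] with ω hmul hmono hc
  rw [hmul, Pi.mul_apply, Pi.one_apply]
  calc Real.exp (W ω) * P[fun ω => Real.exp (-(η * Y ω))|m] ω
      ≤ Real.exp (W ω) * Real.exp (-W ω) := by
        gcongr
        linarith [Real.add_one_le_exp (-W ω), hmono.trans_eq hc]
    _ = 1 := by rw [← Real.exp_add, add_neg_cancel, Real.exp_zero]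

theorem ae_condExp_sub_condExp_le [IsFiniteMeasure P] (hm : m ≤ m0) {X₁ X₂ Y W : Ω → ℝ}
    (hX₁ : Integrable X₁ P) (hX₂ : Integrable X₂ P) (hY : Integrable Y P)
    (hW : StronglyMeasurable[m] W) (hWint : Integrable W P) (h : ∀ᵐ ω ∂P, X₁ ω - X₂ ω ≤ Y ω - W ω) :
    ∀ᵐ ω ∂P, P[X₁|m] ω - P[X₂|m] ω ≤ P[Y|m] ω - W ω := by
  filter_upwards [condExp_sub hX₁ hX₂ m, condExp_sub hY hWint m,
    condExp_mono (m := m) (hX₁.sub hX₂) (hY.sub hWint) h] with ω h₁ h₂ hmono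
  simpa only [h₁, h₂, Pi.sub_apply, condExp_of_stronglyMeasurable hm hW hWint] using hmono

theorem one_sub_le_measure_of_ae_imp [IsProbabilityMeasure P] {s t : Set Ω}
    (h : ∀ᵐ ω ∂P, ω ∉ t → ω ∈ s) : 1 - P t ≤ P s := by
  have hcompl : P sᶜ ≤ P t :=
    measure_mono_ae (h.mono fun ω hω hs => by_contra fun ht => hs (hω ht))
  calc 1 - P t ≤ 1 - P sᶜ := tsub_le_tsub_left hcompl 1
    _ ≤ P s := by
      rw [tsub_le_iff_right, ← measure_univ (μ := P), ← Set.union_compl_self s]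
      exact measure_union_le s sᶜ

variable {ℱ : Filtration ℕ m0}

theorem supermartingale_exp_sum_Icc [IsFiniteMeasure P] {c : ℕ → Ω → ℝ} {B : ℝ}
    (hc : ∀ t, 1 ≤ t → StronglyMeasurable[ℱ t] (c t)) (hcB : ∀ t, 1 ≤ t → ∀ᵐ ω ∂P, c t ω ≤ B)
    (hcond : ∀ t, 1 ≤ t → P[fun ω => Real.exp (c t ω)|ℱ (t - 1)] ≤ᵐ[P] 1) :
    Supermartingale (fun n ω => Real.exp (∑ t ∈ Icc 1 n, c t ω)) ℱ P := by
  have hsum (n : ℕ) : StronglyMeasurable[ℱ n] fun ω => ∑ t ∈ Icc 1 n, c t ω :=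
    Finset.stronglyMeasurable_fun_sum _ fun t ht =>
      (hc t (mem_Icc.1 ht).1).mono (ℱ.mono (mem_Icc.1 ht).2)
  have hadp : StronglyAdapted ℱ fun n ω => Real.exp (∑ t ∈ Icc 1 n, c t ω) := fun n =>
    Real.continuous_exp.comp_stronglyMeasurable (hsum n)
  have hexp (n : ℕ) : Integrable (fun ω => Real.exp (∑ t ∈ Icc 1 n, c t ω)) P := by
    refine integrable_exp_of_ae_le ((hsum n).mono (ℱ.le n)).aestronglyMeasurable (B := n * B) ?_
    filter_upwards [ae_all_iff.2 fun t => Filter.eventually_imp_distrib_left.2 (hcB t)] with ω h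
    simpa using Finset.sum_le_card_nsmul (Icc 1 n) (c · ω) B fun t ht => h t (mem_Icc.1 ht).1
  refine supermartingale_nat hadp hexp fun n => ?_
  have hstep : (fun ω => Real.exp (∑ t ∈ Icc 1 (n + 1), c t ω))
      = (fun ω => Real.exp (∑ t ∈ Icc 1 n, c t ω)) * fun ω => Real.exp (c (n + 1) ω) := by
    ext ω
    rw [Pi.mul_apply, ← Real.exp_add, sum_Icc_succ_top (by omega)]
  have hcn : Integrable (fun ω => Real.exp (c (n + 1) ω)) P :=
    integrable_exp_of_ae_le ((hc _ (by omega)).mono (ℱ.le _)).aestronglyMeasurable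
      (hcB _ (by omega))
  simp only [hstep]
  filter_upwards [condExp_mul_of_stronglyMeasurable_left (hadp n) (hstep ▸ hexp (n + 1)) hcn,
    hcond (n + 1) (by omega)] with ω hmul hle
  rw [hmul, Pi.mul_apply]
  exact mul_le_of_le_one_right (Real.exp_pos _).le hle

theorem MeasureTheory.Supermartingale.maximal_ineq [IsFiniteMeasure P] {f : ℕ → Ω → ℝ}
    (hf : Supermartingale f ℱ P) (hnonneg : ∀ n ω, 0 ≤ f n ω) {ε : ℝ} (hε : 0 < ε) :
    P {ω | ∃ n, ε ≤ f n ω} ≤ ENNReal.ofReal ((∫ ω, f 0 ω ∂P) / ε) := by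
  have hfinite (N : ℕ) :
      P {ω | ∃ n ≤ N, ε ≤ f n ω} ≤ ENNReal.ofReal ((∫ ω, f 0 ω ∂P) / ε) := by
    set τ : Ω → WithTop ℕ := fun ω => (hittingBtwn f (Set.Ici ε) 0 N ω : ℕ)
    have hτ : IsStoppingTime ℱ τ :=
      hf.stronglyAdapted.adapted.isStoppingTime_hittingBtwn measurableSet_Ici
    have hτN (ω : Ω) : τ ω ≤ N := WithTop.coe_le_coe.2 (hittingBtwn_le ω)
    have hstop : ∫ ω, stoppedValue f τ ω ∂P ≤ ∫ ω, f 0 ω ∂P := by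
      have := hf.neg.expected_stoppedValue_mono (isStoppingTime_const ℱ 0) hτ
        (fun ω => WithTop.coe_le_coe.2 (Nat.zero_le _)) hτN
      simpa [stoppedValue, integral_neg] using this
    have hsub : {ω | ∃ n ≤ N, ε ≤ f n ω} ⊆ {ω | ε ≤ stoppedValue f τ ω} :=
      fun ω ⟨n, hn, h⟩ => stoppedValue_hittingBtwn_mem ⟨n, ⟨Nat.zero_le _, hn⟩, h⟩
    have hmarkov := mul_meas_ge_le_integral_of_nonneg (ae_of_all _ fun ω => hnonneg _ _)
      (integrable_stoppedValue ℕ hτ hf.integrable hτN) ε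
    calc P {ω | ∃ n ≤ N, ε ≤ f n ω} ≤ P {ω | ε ≤ stoppedValue f τ ω} := measure_mono hsub
      _ = ENNReal.ofReal (P.real {ω | ε ≤ stoppedValue f τ ω}) := (ofReal_measureReal).symm
      _ ≤ _ := ENNReal.ofReal_le_ofReal ((le_div_iff₀' hε).2 (hmarkov.trans hstop))
  have hmono : Monotone fun N => {ω | ∃ n ≤ N, ε ≤ f n ω} :=
    fun N M hNM ω ⟨n, hn, h⟩ => ⟨n, hn.trans hNM, h⟩
  have hunion : {ω | ∃ n, ε ≤ f n ω} = ⋃ N, {ω | ∃ n ≤ N, ε ≤ f n ω} := by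
    ext ω
    simp only [Set.mem_ofPred_eq, Set.mem_iUnion]
    exact ⟨fun ⟨n, h⟩ => ⟨n, n, le_rfl, h⟩, fun ⟨_, n, _, h⟩ => ⟨n, h⟩⟩
  rw [hunion, hmono.measure_iUnion]
  exact iSup_le hfinite

theorem measure_exists_log_le_sum_freedman_le [IsProbabilityMeasure P] {Y V : ℕ → Ω → ℝ}
    {η δ : ℝ} (hY : ∀ t, 1 ≤ t → StronglyMeasurable[ℱ t] (Y t))
    (hY1 : ∀ t, 1 ≤ t → ∀ᵐ ω ∂P, |η * Y t ω| ≤ 1)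
    (hV : ∀ t, 1 ≤ t → StronglyMeasurable[ℱ (t - 1)] (V t))
    (hVint : ∀ t, 1 ≤ t → Integrable (V t) P) (hYint : ∀ t, 1 ≤ t → Integrable (Y t) P)
    (hYV : ∀ t, 1 ≤ t → ∀ᵐ ω ∂P, Y t ω ^ 2 ≤ V t ω) (hδ : 0 < δ) :
    P {ω | ∃ n, Real.log (1 / δ) ≤
      ∑ t ∈ Icc 1 n, (η * (P[Y t|ℱ (t - 1)] ω - Y t ω) - η ^ 2 * V t ω)} ≤ ENNReal.ofReal δ := by
  have hmart := supermartingale_exp_sum_Icc (P := P) (B := 2)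
    (c := fun t ω => η * (P[Y t|ℱ (t - 1)] ω - Y t ω) - η ^ 2 * V t ω)
    (fun t ht => (((stronglyMeasurable_condExp.mono (ℱ.mono (Nat.sub_le t 1))).sub
      (hY t ht)).const_mul η).sub (((hV t ht).mono (ℱ.mono (Nat.sub_le t 1))).const_mul _))
    (fun t ht => by
      filter_upwards [ae_abs_mul_condExp_le_one (m := ℱ (t - 1)) (hY1 t ht), hY1 t ht,
        hYV t ht] with ω hA hY hV
      nlinarith [abs_le.mp hA, abs_le.mp hY, sq_nonneg η, sq_nonneg (Y t ω)])
    (fun t ht => condExp_exp_mul_condExp_sub_sub_le_one (ℱ.le _) (hYint t ht) (hY1 t ht)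
      (hV t ht) (hVint t ht) (hYV t ht))
  have hville := hmart.maximal_ineq (fun n ω => (Real.exp_pos _).le) (one_div_pos.2 hδ)
  simp only [Icc_eq_empty_of_lt zero_lt_one, sum_empty, Real.exp_zero, integral_const,
    probReal_univ, smul_eq_mul, mul_one, one_div_one_div] at hville
  refine (measure_mono ?_).trans hville
  rintro ω ⟨n, hn⟩
  exact ⟨n, by rwa [← Real.exp_le_exp, Real.exp_log (one_div_pos.2 hδ)] at hn⟩

end Probability

section Online

variable {Ω E : Type*} {m0 : MeasurableSpace Ω} {P : Measure Ω} [NormedAddCommGroup E]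
  {K : Set E} {D G : ℝ}

theorem Convex.abs_le_abs_add_of_hasGradientAt [InnerProductSpace ℝ E] [CompleteSpace E]
    (hK : Convex ℝ K) {f : E → ℝ} {f' : E → E} (hf : ∀ x, HasGradientAt f (f' x) x)
    (hf' : ∀ x ∈ K, ‖f' x‖ ≤ G) (hdiam : ∀ x ∈ K, ∀ y ∈ K, ‖x - y‖ ≤ D) {x y : E} (hx : x ∈ K)
    (hy : y ∈ K) :
    |f y| ≤ |f x| + G * D := by
  have hlip : ‖f y - f x‖ ≤ G * ‖y - x‖ :=
    hK.norm_image_sub_le_of_norm_hasFDerivWithin_le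
      (fun z _ => (hf z).hasFDerivAt.hasFDerivWithinAt)
      (fun z hz => by rw [LinearIsometryEquiv.norm_map]; exact hf' z hz) hx hy
  have hG : 0 ≤ G := (norm_nonneg _).trans (hf' x hx)
  rw [Real.norm_eq_abs] at hlip
  linarith [mul_le_mul_of_nonneg_left (hdiam y hy x hx) hG, abs_sub_abs_le_abs_sub (f y) (f x)]

theorem integrable_comp_of_integrable_biSup_abs [InnerProductSpace ℝ E] [CompleteSpace E]
    [MeasurableSpace E] {m : MeasurableSpace Ω} (hm : m ≤ m0) {ℓ : Ω → E → ℝ} {g : Ω → E → E}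
    {r : Ω → E} (hK : Convex ℝ K) (hdiam : ∀ x ∈ K, ∀ y ∈ K, ‖x - y‖ ≤ D)
    (hℓ : Measurable[m.prod inferInstance] fun z : Ω × E => ℓ z.1 z.2)
    (hgrad : ∀ᵐ ω ∂P, ∀ x, HasGradientAt (ℓ ω) (g ω x) x)
    (hgG : ∀ᵐ ω ∂P, ∀ x ∈ K, ‖g ω x‖ ≤ G) (hint : Integrable (fun ω => ⨆ x ∈ K, |ℓ ω x|) P)
    (hr : Measurable[m] r) (hrK : ∀ ω, r ω ∈ K) :
    Integrable (fun ω => ℓ ω (r ω)) P := by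
  refine hint.mono' ((hℓ.comp (measurable_id.prodMk hr)).mono hm le_rfl).aestronglyMeasurable ?_
  filter_upwards [hgrad, hgG] with ω h₁ h₂
  refine le_ciSup₂ (f := fun x (_ : x ∈ K) => |ℓ ω x|) ⟨|ℓ ω (r ω)| + G * D, ?_⟩ (r ω) (hrK ω)
  rintro _ ⟨_, ⟨x, rfl⟩, ⟨hx, rfl⟩⟩
  exact hK.abs_le_abs_add_of_hasGradientAt h₁ h₂ hdiam (hrK ω) hx

theorem measurable_inner_sub [InnerProductSpace ℝ E] [MeasurableSpace E] [BorelSpace E]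
    [SecondCountableTopology E] {m : MeasurableSpace Ω} {g : Ω → E → E} {p q : Ω → E}
    (hg : Measurable[m.prod inferInstance] fun z : Ω × E => g z.1 z.2) (hp : Measurable[m] p)
    (hq : Measurable[m] q) : Measurable[m] fun ω => ⟪g ω (p ω), p ω - q ω⟫ :=
  (hg.comp (measurable_id.prodMk hp)).inner (hp.sub hq)

theorem integrable_inner_sub [InnerProductSpace ℝ E] [IsFiniteMeasure P] {g : Ω → E → E}
    {p q : Ω → E} (hY : AEStronglyMeasurable (fun ω => ⟪g ω (p ω), p ω - q ω⟫) P) (hG : 0 ≤ G)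
    (hgG : ∀ᵐ ω ∂P, ∀ x ∈ K, ‖g ω x‖ ≤ G) (hdiam : ∀ x ∈ K, ∀ y ∈ K, ‖x - y‖ ≤ D)
    (hp : ∀ ω, p ω ∈ K) (hq : ∀ ω, q ω ∈ K) :
    Integrable (fun ω => ⟪g ω (p ω), p ω - q ω⟫) P :=
  .of_bound hY (G * D) <| hgG.mono fun ω h => (abs_real_inner_le_norm _ _).trans <|
    mul_le_mul (h _ (hp ω)) (hdiam _ (hp ω) _ (hq ω)) (norm_nonneg _) hG

theorem integrable_sq_norm_sub [IsFiniteMeasure P] [MeasurableSpace E] [BorelSpace E]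
    {p q : Ω → E} (hpq : Measurable fun ω => p ω - q ω) (hdiam : ∀ x ∈ K, ∀ y ∈ K, ‖x - y‖ ≤ D)
    (hp : ∀ ω, p ω ∈ K) (hq : ∀ ω, q ω ∈ K) :
    Integrable (fun ω => ‖p ω - q ω‖ ^ 2) P :=
  .of_bound (hpq.norm.pow_const 2).aestronglyMeasurable (D ^ 2) <| ae_of_all _ fun ω => by
    rw [Real.norm_of_nonneg (sq_nonneg _)]
    exact pow_le_pow_left₀ (norm_nonneg _) (hdiam _ (hp ω) _ (hq ω)) 2

theorem measure_exists_log_le_sum_freedman_inner_le [InnerProductSpace ℝ E] [MeasurableSpace E]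
    [BorelSpace E] [SecondCountableTopology E] [IsProbabilityMeasure P] {ℱ : Filtration ℕ m0}
    {g : ℕ → Ω → E → E} {p q : ℕ → Ω → E} {η δ : ℝ}
    (hdiam : ∀ x ∈ K, ∀ y ∈ K, ‖x - y‖ ≤ D) (hG : 0 ≤ G) (hη : 0 ≤ η) (hηGD : η * (G * D) ≤ 1)
    (hg : ∀ t, 1 ≤ t → Measurable[(ℱ t).prod inferInstance] fun z : Ω × E => g t z.1 z.2)
    (hgG : ∀ t, 1 ≤ t → ∀ᵐ ω ∂P, ∀ x ∈ K, ‖g t ω x‖ ≤ G)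
    (hpK : ∀ t, 1 ≤ t → ∀ ω, p t ω ∈ K) (hqK : ∀ t, 1 ≤ t → ∀ ω, q t ω ∈ K)
    (hp : ∀ t, 1 ≤ t → Measurable[ℱ (t - 1)] (p t))
    (hq : ∀ t, 1 ≤ t → Measurable[ℱ (t - 1)] (q t)) (hδ : 0 < δ) :
    P {ω | ∃ n, Real.log (1 / δ) ≤ ∑ t ∈ Icc 1 n,
      (η * (P[fun ω => ⟪g t ω (p t ω), p t ω - q t ω⟫|ℱ (t - 1)] ω - ⟪g t ω (p t ω), p t ω - q t ω⟫)
        - η ^ 2 * (G ^ 2 * ‖p t ω - q t ω‖ ^ 2))} ≤ ENNReal.ofReal δ := by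
  have hΔ (t : ℕ) (ht : 1 ≤ t) : Measurable[ℱ (t - 1)] fun ω => p t ω - q t ω :=
    (hp t ht).sub (hq t ht)
  have hY (t : ℕ) (ht : 1 ≤ t) :
      StronglyMeasurable[ℱ t] fun ω => ⟪g t ω (p t ω), p t ω - q t ω⟫ :=
    (measurable_inner_sub (hg t ht) ((hp t ht).mono (ℱ.mono (Nat.sub_le t 1)) le_rfl)
      ((hq t ht).mono (ℱ.mono (Nat.sub_le t 1)) le_rfl)).stronglyMeasurable
  have hCS (t : ℕ) (ht : 1 ≤ t) :
      ∀ᵐ ω ∂P, |⟪g t ω (p t ω), p t ω - q t ω⟫| ≤ G * ‖p t ω - q t ω‖ :=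
    (hgG t ht).mono fun ω h => (abs_real_inner_le_norm _ _).trans
      (mul_le_mul_of_nonneg_right (h _ (hpK t ht ω)) (norm_nonneg _))
  refine measure_exists_log_le_sum_freedman_le (Y := fun t ω => ⟪g t ω (p t ω), p t ω - q t ω⟫)
    (V := fun t ω => G ^ 2 * ‖p t ω - q t ω‖ ^ 2) hY (fun t ht => ?_)
    (fun t ht => (((measurable_norm.comp (hΔ t ht)).pow_const 2).const_mul _).stronglyMeasurable)
    (fun t ht => (integrable_sq_norm_sub ((hΔ t ht).mono (ℱ.le _) le_rfl) hdiam (hpK t ht)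
      (hqK t ht)).const_mul _)
    (fun t ht => integrable_inner_sub ((hY t ht).mono (ℱ.le t)).aestronglyMeasurable hG
      (hgG t ht) hdiam (hpK t ht) (hqK t ht))
    (fun t ht => (hCS t ht).mono fun ω h => by
      rw [← mul_pow, ← sq_abs]
      exact pow_le_pow_left₀ (abs_nonneg _) h 2) hδ
  filter_upwards [hCS t ht] with ω h
  rw [abs_mul, abs_of_nonneg hη]
  calc η * |⟪g t ω (p t ω), p t ω - q t ω⟫| ≤ η * (G * D) :=
        mul_le_mul_of_nonneg_left
          (h.trans (mul_le_mul_of_nonneg_left (hdiam _ (hpK t ht ω) _ (hqK t ht ω)) hG)) hη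
    _ ≤ 1 := hηGD

theorem ae_condExp_loss_sub_condExp_loss_le [InnerProductSpace ℝ E] [CompleteSpace E]
    [MeasurableSpace E] [BorelSpace E] [SecondCountableTopology E] [IsFiniteMeasure P]
    {ℱ : Filtration ℕ m0} {ℓ : ℕ → Ω → E → ℝ} {g : ℕ → Ω → E → E} {p q : ℕ → Ω → E} {lam : ℝ}
    (hK : Convex ℝ K) (hdiam : ∀ x ∈ K, ∀ y ∈ K, ‖x - y‖ ≤ D) (hG : 0 ≤ G)
    (hℓ : ∀ t, 1 ≤ t → Measurable[(ℱ t).prod inferInstance] fun z : Ω × E => ℓ t z.1 z.2)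
    (hg : ∀ t, 1 ≤ t → Measurable[(ℱ t).prod inferInstance] fun z : Ω × E => g t z.1 z.2)
    (hgrad : ∀ t, 1 ≤ t → ∀ᵐ ω ∂P, ∀ x, HasGradientAt (ℓ t ω) (g t ω x) x)
    (hconv : ∀ t, 1 ≤ t → ∀ᵐ ω ∂P, ∀ x ∈ K, ∀ y ∈ K,
      ℓ t ω x - ℓ t ω y ≤ ⟪g t ω x, x - y⟫ - lam * ‖x - y‖ ^ 2)
    (hgG : ∀ t, 1 ≤ t → ∀ᵐ ω ∂P, ∀ x ∈ K, ‖g t ω x‖ ≤ G)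
    (hint : ∀ t, 1 ≤ t → Integrable (fun ω => ⨆ x ∈ K, |ℓ t ω x|) P)
    (hpK : ∀ t, 1 ≤ t → ∀ ω, p t ω ∈ K) (hqK : ∀ t, 1 ≤ t → ∀ ω, q t ω ∈ K)
    (hp : ∀ t, 1 ≤ t → Measurable[ℱ (t - 1)] (p t))
    (hq : ∀ t, 1 ≤ t → Measurable[ℱ (t - 1)] (q t)) :
    ∀ᵐ ω ∂P, ∀ t, 1 ≤ t →
      P[fun ω => ℓ t ω (p t ω)|ℱ (t - 1)] ω - P[fun ω => ℓ t ω (q t ω)|ℱ (t - 1)] ω ≤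
        P[fun ω => ⟪g t ω (p t ω), p t ω - q t ω⟫|ℱ (t - 1)] ω - lam * ‖p t ω - q t ω‖ ^ 2 := by
  refine ae_all_iff.2 fun t => Filter.eventually_imp_distrib_left.2 fun ht => ?_
  have hp' := (hp t ht).mono (ℱ.mono (Nat.sub_le t 1)) le_rfl
  have hq' := (hq t ht).mono (ℱ.mono (Nat.sub_le t 1)) le_rfl
  have hΔ : Measurable[ℱ (t - 1)] fun ω => p t ω - q t ω := (hp t ht).sub (hq t ht)
  exact ae_condExp_sub_condExp_le (ℱ.le _)
    (integrable_comp_of_integrable_biSup_abs (ℱ.le t) hK hdiam (hℓ t ht) (hgrad t ht) (hgG t ht)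
      (hint t ht) hp' (hpK t ht))
    (integrable_comp_of_integrable_biSup_abs (ℱ.le t) hK hdiam (hℓ t ht) (hgrad t ht) (hgG t ht)
      (hint t ht) hq' (hqK t ht))
    (integrable_inner_sub ((measurable_inner_sub (hg t ht) hp' hq').mono (ℱ.le t)
      le_rfl).aestronglyMeasurable hG (hgG t ht) hdiam (hpK t ht) (hqK t ht))
    (((measurable_norm.comp hΔ).pow_const 2).const_mul lam).stronglyMeasurable
    ((integrable_sq_norm_sub (hΔ.mono (ℱ.le _) le_rfl) hdiam (hpK t ht) (hqK t ht)).const_mul lam)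
    ((hconv t ht).mono fun ω h => h _ (hpK t ht ω) _ (hqK t ht ω))

end Online

theorem exists_learning_rate {G D lam : ℝ} (hG : 0 < G) (hD : 0 < D) (hlam : 0 < lam)
    (hlamG : lam ≤ 6 * G ^ 2) :
    ∃ η > 0, η * G ^ 2 ≤ lam ∧ η * (G * D) ≤ 1 ∧ 1 / η ≤ 2 * (G * D) ^ 2 + 6 * G ^ 2 / lam := by
  refine ⟨min (lam / G ^ 2) (1 / (G * D)), by positivity, ?_, ?_, ?_⟩
  · calc _ ≤ lam / G ^ 2 * G ^ 2 := by gcongr; exact min_le_left _ _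
      _ = lam := div_mul_cancel₀ _ (by positivity)
  · calc _ ≤ 1 / (G * D) * (G * D) := by gcongr; exact min_le_right _ _
      _ = 1 := one_div_mul_cancel (by positivity)
  · have h6 : 1 ≤ 6 * G ^ 2 / lam := by rw [le_div_iff₀ hlam]; linarith
    rcases min_choice (lam / G ^ 2) (1 / (G * D)) with h | h <;> rw [h]
    · rw [one_div_div]
      have : G ^ 2 / lam ≤ 6 * G ^ 2 / lam := by gcongr; linarith
      nlinarith [sq_nonneg (G * D)]
    · rw [one_div_one_div]
      nlinarith [sq_nonneg (G * D - 1 / 4)]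

theorem sum_sub_sum_le_sum_add_mul_of_freedman {ι : Type*} (s : Finset ι) {a b A y q : ι → ℝ}
    {η lam G C L : ℝ} (hη : 0 < η) (hηG : η * G ^ 2 ≤ lam) (hC : 1 / η ≤ C) (hL : 0 ≤ L)
    (hab : ∀ i ∈ s, a i - b i ≤ A i - lam * q i) (hq : ∀ i ∈ s, 0 ≤ q i)
    (hfreed : ∑ i ∈ s, (η * (A i - y i) - η ^ 2 * (G ^ 2 * q i)) < L) :
    ∑ i ∈ s, a i - ∑ i ∈ s, b i ≤ ∑ i ∈ s, y i + C * L := by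
  have hsum : ∑ i ∈ s, (η * (A i - y i) - η ^ 2 * (G ^ 2 * q i))
      = η * (∑ i ∈ s, A i - ∑ i ∈ s, y i - η * G ^ 2 * ∑ i ∈ s, q i) := by
    rw [sum_sub_distrib, ← mul_sum, ← mul_sum, ← mul_sum, sum_sub_distrib]
    ring
  have hdrift : ∑ i ∈ s, A i - ∑ i ∈ s, y i - η * G ^ 2 * ∑ i ∈ s, q i ≤ C * L := by
    have := (lt_div_iff₀' hη).2 (hsum ▸ hfreed)
    rw [div_eq_mul_one_div] at this
    nlinarith [mul_le_mul_of_nonneg_left hC hL]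
  have hcond : ∑ i ∈ s, a i - ∑ i ∈ s, b i ≤ ∑ i ∈ s, A i - lam * ∑ i ∈ s, q i := by
    rw [← sum_sub_distrib, mul_sum, ← sum_sub_distrib]
    exact sum_le_sum hab
  nlinarith [mul_le_mul_of_nonneg_right hηG (sum_nonneg hq)]

/-- Proposition `SOCO_with_Azuma`: for `ℱ`-adapted random `λ`-strongly convex losses (paper's
convention) with `G`-bounded gradients on a convex set `K ⊆ ℝ^d` of diameter at most `D`
(with `λ ≤ 6G²`), and predictable `K`-valued sequences `μ̂_t`, `μ_t`, with probability at least
`1 − 2δ` it holds simultaneously for every `T ≥ 1` that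
`Σ_t E[ℓ_t(μ̂_t)|ℱ_{t−1}] − Σ_t E[ℓ_t(μ_t)|ℱ_{t−1}]
  ≤ Σ_t ⟨∇ℓ_t(μ̂_t), μ̂_t − μ_t⟩ + (2(GD)² + 6G²/λ)·log(1/δ)`. -/
theorem soco_with_azuma {d : ℕ} {Ω : Type*} [m0 : MeasurableSpace Ω]
    (P : Measure Ω) [IsProbabilityMeasure P] (ℱ : Filtration ℕ m0)
    (K : Set (EuclideanSpace ℝ (Fin d))) (hK : Convex ℝ K)
    (D : ℝ) (hD : 0 < D) (hdiam : ∀ x ∈ K, ∀ y ∈ K, ‖x - y‖ ≤ D)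
    (lam G : ℝ) (hlam : 0 < lam) (hG : 0 < G) (hlamG : lam ≤ 6 * G ^ 2)
    (ℓ : ℕ → Ω → EuclideanSpace ℝ (Fin d) → ℝ)
    (g : ℕ → Ω → EuclideanSpace ℝ (Fin d) → EuclideanSpace ℝ (Fin d))
    (hmeasℓ : ∀ t, 1 ≤ t →
      @Measurable (Ω × EuclideanSpace ℝ (Fin d)) ℝ ((ℱ t).prod inferInstance) inferInstance
        (fun q => ℓ t q.1 q.2))
    (hmeasg : ∀ t, 1 ≤ t →
      @Measurable (Ω × EuclideanSpace ℝ (Fin d)) (EuclideanSpace ℝ (Fin d))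
        ((ℱ t).prod inferInstance) inferInstance (fun q => g t q.1 q.2))
    (has : ∀ᵐ ω ∂P, ∀ t, 1 ≤ t →
      (∀ x, HasGradientAt (ℓ t ω) (g t ω x) x) ∧
      (∀ μ ∈ K, ∀ μ₀ ∈ K, ℓ t ω μ - ℓ t ω μ₀ ≤ ⟪g t ω μ, μ - μ₀⟫ - lam * ‖μ - μ₀‖ ^ 2) ∧
      (∀ x ∈ K, ‖g t ω x‖ ≤ G))
    (hint : ∀ t, 1 ≤ t → Integrable (fun ω => ⨆ x ∈ K, |ℓ t ω x|) P)
    (p μc : ℕ → Ω → EuclideanSpace ℝ (Fin d))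
    (hpK : ∀ t, 1 ≤ t → ∀ ω, p t ω ∈ K) (hμcK : ∀ t, 1 ≤ t → ∀ ω, μc t ω ∈ K)
    (hpmeas : ∀ t, 1 ≤ t → @Measurable Ω (EuclideanSpace ℝ (Fin d)) (ℱ (t - 1)) _ (p t))
    (hμcmeas : ∀ t, 1 ≤ t → @Measurable Ω (EuclideanSpace ℝ (Fin d)) (ℱ (t - 1)) _ (μc t))
    (δ : ℝ) (hδ0 : 0 < δ) (hδ1 : δ < 1) :
    ENNReal.ofReal (1 - 2 * δ) ≤
      P {ω | ∀ T, 1 ≤ T →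
        ∑ t ∈ Icc 1 T, (P[fun ω' => ℓ t ω' (p t ω') | ℱ (t - 1)]) ω
          - ∑ t ∈ Icc 1 T, (P[fun ω' => ℓ t ω' (μc t ω') | ℱ (t - 1)]) ω ≤
        ∑ t ∈ Icc 1 T, ⟪g t ω (p t ω), p t ω - μc t ω⟫
          + (2 * (G * D) ^ 2 + 6 * G ^ 2 / lam) * Real.log (1 / δ)} := by
  obtain ⟨η, hη, hηG, hηGD, hηC⟩ := exists_learning_rate hG hD hlam hlamG
  have hbad := measure_exists_log_le_sum_freedman_inner_le (P := P) hdiam hG.le hη.le hηGD hmeasg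
    (fun t ht => has.mono fun ω h => (h t ht).2.2) hpK hμcK hpmeas hμcmeas hδ0
  have hconv := ae_condExp_loss_sub_condExp_loss_le hK hdiam hG.le hmeasℓ hmeasg
    (fun t ht => has.mono fun ω h => (h t ht).1) (fun t ht => has.mono fun ω h => (h t ht).2.1)
    (fun t ht => has.mono fun ω h => (h t ht).2.2) hint hpK hμcK hpmeas hμcmeas
  have hlog : 0 ≤ Real.log (1 / δ) := Real.log_nonneg (by rw [le_div_iff₀ hδ0]; linarith)
  calc ENNReal.ofReal (1 - 2 * δ) ≤ 1 - ENNReal.ofReal δ := by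
        rw [← ENNReal.ofReal_one, ← ENNReal.ofReal_sub _ hδ0.le]
        exact ENNReal.ofReal_le_ofReal (by linarith)
    _ ≤ 1 - P _ := tsub_le_tsub_left hbad 1
    _ ≤ P _ := one_sub_le_measure_of_ae_imp <| by
        filter_upwards [hconv] with ω hω hgood T _
        simp only [not_exists, not_le] at hgood
        exact sum_sub_sum_le_sum_add_mul_of_freedman _ hη hηG hηC hlog
          (fun t ht => hω t (mem_Icc.1 ht).1) (fun t _ => sq_nonneg _) (hgood T)
end
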